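/- Fix x ∈ ℝ^n and set g = Aᵀ(Ax − b) + λ²Dᵀ(Dx + c − Z(x)). If g ≠ 0, then −g is a descent direction for f_proj at x: there exists ᾱ > 0 such that f_proj(x − αg) < f_proj(x) for all α ∈ (0, ᾱ). -/

import Mathlib

open Matrix BigOperators

noncomputable def fjoint {m n l : ℕ} (A : Matrix (Fin m) (Fin n) ℝ) (b : Fin m → ℝ)
    (D : Matrix (Fin l) (Fin n) ℝ) (c : Fin l → ℝ) (μ lam : ℝ)
    (x : Fin n → ℝ) (y : Fin l → ℝ) : ℝ :=
  (1/2) * ∑ i, (A.mulVec x i - b i)^2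
    + (lam^2/2) * ∑ i, (D.mulVec x i - y i + c i)^2
    + μ * ∑ i, |y i|

noncomputable def shrinkZ {n l : ℕ} (D : Matrix (Fin l) (Fin n) ℝ) (c : Fin l → ℝ)
    (μ lam : ℝ) (x : Fin n → ℝ) : Fin l → ℝ :=
  fun i => Real.sign (D.mulVec x i + c i) * max (|D.mulVec x i + c i| - μ / lam^2) 0

noncomputable def fproj {m n l : ℕ} (A : Matrix (Fin m) (Fin n) ℝ) (b : Fin m → ℝ)
    (D : Matrix (Fin l) (Fin n) ℝ) (c : Fin l → ℝ) (μ lam : ℝ)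
    (x : Fin n → ℝ) : ℝ :=
  fjoint A b D c μ lam x (shrinkZ D c μ lam x)

/-!
Coordinatewise, soft thresholding is the proximal map of `μ‖·‖₁`, so `Z(z)` minimises
`f_joint(z, ·)` and `f_proj(z) ≤ f_joint(z, Z(x))` for every `z`, with equality at `z = x`.
The right-hand side is a quadratic in `z` whose gradient at `x` is `g`, so along `x - α g` it equals
`f_proj(x) - α ‖g‖² + O(α²)`, which is below `f_proj(x)` for small `α > 0`.
-/

noncomputable def softThreshold (τ t : ℝ) : ℝ := Real.sign t * max (|t| - τ) 0

lemma softThreshold_of_abs_le {τ t : ℝ} (h : |t| ≤ τ) : softThreshold τ t = 0 := by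
  simp [softThreshold, max_eq_right (sub_nonpos.mpr h)]

lemma softThreshold_of_lt {τ t : ℝ} (hτ : 0 ≤ τ) (h : τ < t) : softThreshold τ t = t - τ := by
  have ht : 0 < t := hτ.trans_lt h
  simp [softThreshold, Real.sign_of_pos ht, abs_of_pos ht, h.le]

lemma softThreshold_of_lt_neg {τ t : ℝ} (hτ : 0 ≤ τ) (h : t < -τ) :
    softThreshold τ t = t + τ := by
  have ht : t < 0 := h.trans_le (neg_nonpos.mpr hτ)
  rw [softThreshold, Real.sign_of_neg ht, abs_of_neg ht, max_eq_left (by linarith)]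
  ring

/-- The optimality conditions `t - s ∈ τ ∂|·|(s)` of the soft threshold `s`. -/
lemma softThreshold_optimality {τ : ℝ} (hτ : 0 ≤ τ) (t : ℝ) :
    (t - softThreshold τ t) * softThreshold τ t = τ * |softThreshold τ t| ∧
      |t - softThreshold τ t| ≤ τ := by
  rcases lt_or_ge τ t with h | h
  · rw [softThreshold_of_lt hτ h, abs_of_pos (by linarith)]
    exact ⟨by ring, by simp [abs_of_nonneg hτ]⟩
  rcases lt_or_ge t (-τ) with h' | h'
  · rw [softThreshold_of_lt_neg hτ h', abs_of_neg (by linarith)]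
    exact ⟨by ring, by simp [abs_of_nonneg hτ]⟩
  · rw [softThreshold_of_abs_le (abs_le.mpr ⟨h', h⟩)]
    simpa using abs_le.mpr ⟨h', h⟩

lemma half_sq_add_softThreshold_le {τ : ℝ} (hτ : 0 ≤ τ) (t y : ℝ) :
    (t - softThreshold τ t) ^ 2 / 2 + τ * |softThreshold τ t| ≤ (t - y) ^ 2 / 2 + τ * |y| := by
  obtain ⟨hcomp, hsub⟩ := softThreshold_optimality hτ t
  set s := softThreshold τ t
  have hy : (t - s) * y ≤ τ * |y| :=
    calc (t - s) * y ≤ |t - s| * |y| := by rw [← abs_mul]; exact le_abs_self _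
      _ ≤ τ * |y| := mul_le_mul_of_nonneg_right hsub (abs_nonneg y)
  nlinarith [sq_nonneg (y - s)]

lemma shrinkZ_apply {n l : ℕ} (D : Matrix (Fin l) (Fin n) ℝ) (c : Fin l → ℝ) (μ lam : ℝ)
    (x : Fin n → ℝ) (i : Fin l) :
    shrinkZ D c μ lam x i = softThreshold (μ / lam ^ 2) ((D *ᵥ x) i + c i) := rfl

lemma fproj_le_fjoint {m n l : ℕ} (A : Matrix (Fin m) (Fin n) ℝ) (b : Fin m → ℝ)
    (D : Matrix (Fin l) (Fin n) ℝ) (c : Fin l → ℝ) {μ lam : ℝ} (hμ : 0 ≤ μ) (hlam : lam ≠ 0)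
    (x : Fin n → ℝ) (y : Fin l → ℝ) :
    fproj A b D c μ lam x ≤ fjoint A b D c μ lam x y := by
  have hlam2 : 0 < lam ^ 2 := by positivity
  have hcoord : ∀ i, lam ^ 2 / 2 * ((D *ᵥ x) i - shrinkZ D c μ lam x i + c i) ^ 2
      + μ * |shrinkZ D c μ lam x i| ≤ lam ^ 2 / 2 * ((D *ᵥ x) i - y i + c i) ^ 2 + μ * |y i| := by
    intro i
    rw [shrinkZ_apply]
    set t := (D *ᵥ x) i + c i
    set s := softThreshold (μ / lam ^ 2) t
    calc lam ^ 2 / 2 * ((D *ᵥ x) i - s + c i) ^ 2 + μ * |s|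
        = lam ^ 2 * ((t - s) ^ 2 / 2 + μ / lam ^ 2 * |s|) := by field_simp; ring
      _ ≤ lam ^ 2 * ((t - y i) ^ 2 / 2 + μ / lam ^ 2 * |y i|) :=
        mul_le_mul_of_nonneg_left
          (half_sq_add_softThreshold_le (div_nonneg hμ hlam2.le) t (y i)) hlam2.le
      _ = lam ^ 2 / 2 * ((D *ᵥ x) i - y i + c i) ^ 2 + μ * |y i| := by field_simp; ring
  have hsum := Finset.sum_le_sum fun i (_ : i ∈ Finset.univ) => hcoord i
  simp only [Finset.sum_add_distrib, ← Finset.mul_sum] at hsum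
  unfold fproj fjoint
  linarith

lemma sum_sub_mul_sq {ι R : Type*} [Fintype ι] [CommRing R] (u p : ι → R) (α : R) :
    ∑ i, (u i - α * p i) ^ 2 = ∑ i, u i ^ 2 - 2 * α * (u ⬝ᵥ p) + α ^ 2 * ∑ i, p i ^ 2 := by
  simp only [dotProduct, Finset.mul_sum, ← Finset.sum_sub_distrib, ← Finset.sum_add_distrib]
  exact Finset.sum_congr rfl fun i _ => by ring

noncomputable def fjointGradX {m n l : ℕ} (A : Matrix (Fin m) (Fin n) ℝ) (b : Fin m → ℝ)
    (D : Matrix (Fin l) (Fin n) ℝ) (c : Fin l → ℝ) (lam : ℝ) (x : Fin n → ℝ) (y : Fin l → ℝ) :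
    Fin n → ℝ :=
  Aᵀ *ᵥ (A *ᵥ x - b) + lam ^ 2 • Dᵀ *ᵥ (D *ᵥ x + c - y)

lemma fjoint_sub_smul {m n l : ℕ} (A : Matrix (Fin m) (Fin n) ℝ) (b : Fin m → ℝ)
    (D : Matrix (Fin l) (Fin n) ℝ) (c : Fin l → ℝ) (μ lam : ℝ) (x g : Fin n → ℝ)
    (y : Fin l → ℝ) (α : ℝ) :
    fjoint A b D c μ lam (x - α • g) y = fjoint A b D c μ lam x y
      - α * (fjointGradX A b D c lam x y ⬝ᵥ g)
      + α ^ 2 / 2 * (∑ i, (A *ᵥ g) i ^ 2 + lam ^ 2 * ∑ i, (D *ᵥ g) i ^ 2) := by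
  have hA : ∀ i, (A *ᵥ (x - α • g)) i - b i = (A *ᵥ x - b) i - α * (A *ᵥ g) i := by
    intro i
    simp only [mulVec_sub, mulVec_smul, Pi.sub_apply, Pi.smul_apply, smul_eq_mul]
    ring
  have hD : ∀ i, (D *ᵥ (x - α • g)) i - y i + c i = (D *ᵥ x - y + c) i - α * (D *ᵥ g) i := by
    intro i
    simp only [mulVec_sub, mulVec_smul, Pi.sub_apply, Pi.add_apply, Pi.smul_apply, smul_eq_mul]
    ring
  have hgrad : fjointGradX A b D c lam x y ⬝ᵥ g
      = (A *ᵥ x - b) ⬝ᵥ (A *ᵥ g) + lam ^ 2 * ((D *ᵥ x - y + c) ⬝ᵥ (D *ᵥ g)) := by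
    simp only [fjointGradX, ← sub_add_eq_add_sub, add_dotProduct, smul_dotProduct, smul_eq_mul,
      mulVec_transpose, dotProduct_mulVec]
  simp only [fjoint, hA, hD, sum_sub_mul_sq, hgrad]
  simp only [Pi.sub_apply, Pi.add_apply]
  ring

lemma exists_pos_forall_sq_mul_lt_mul {G : ℝ} (hG : 0 < G) (C : ℝ) :
    ∃ abar > (0 : ℝ), ∀ α : ℝ, 0 < α → α < abar → α ^ 2 / 2 * C < α * G := by
  refine ⟨G / (|C| + 1), by positivity, fun α hα hαbar => ?_⟩
  have hαC : α * (|C| + 1) < G := (lt_div_iff₀ (by positivity)).mp hαbar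
  nlinarith [le_abs_self C, abs_nonneg C]

theorem stmt11 {m n l : ℕ} (A : Matrix (Fin m) (Fin n) ℝ) (b : Fin m → ℝ)
    (D : Matrix (Fin l) (Fin n) ℝ) (c : Fin l → ℝ) (μ lam : ℝ)
    (hμ : 0 < μ) (hlam : 0 < lam) (x : Fin n → ℝ)
    (g : Fin n → ℝ)
    (hg : g = Aᵀ.mulVec (A.mulVec x - b)
        + lam^2 • Dᵀ.mulVec (D.mulVec x + c - shrinkZ D c μ lam x))
    (hg0 : g ≠ 0) :
    ∃ abar > (0:ℝ), ∀ α : ℝ, 0 < α → α < abar →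
      fproj A b D c μ lam (x - α • g) < fproj A b D c μ lam x := by
  have hgg : 0 < g ⬝ᵥ g := by simpa using dotProduct_self_star_pos_iff.mpr hg0
  obtain ⟨abar, habar, hdesc⟩ := exists_pos_forall_sq_mul_lt_mul hgg
    (∑ i, (A *ᵥ g) i ^ 2 + lam ^ 2 * ∑ i, (D *ᵥ g) i ^ 2)
  refine ⟨abar, habar, fun α hα hαbar => ?_⟩
  calc fproj A b D c μ lam (x - α • g)
      ≤ fjoint A b D c μ lam (x - α • g) (shrinkZ D c μ lam x) :=
        fproj_le_fjoint A b D c hμ.le hlam.ne' _ _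
    _ = fproj A b D c μ lam x - α * (g ⬝ᵥ g)
          + α ^ 2 / 2 * (∑ i, (A *ᵥ g) i ^ 2 + lam ^ 2 * ∑ i, (D *ᵥ g) i ^ 2) := by
        rw [fjoint_sub_smul, show fjointGradX A b D c lam x _ = g from hg.symm]; rfl
    _ < fproj A b D c μ lam x := by linarith [hdesc α hα hαbar]
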